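/- arXiv:1905.03067 — 5 statements merged into one kernel-verified Lean document; each statement's English description precedes it below -/
import Mathlib

section
/- Let L be a finitely generated free R-module of rank n with a σ-sesquilinear form B : L × L → R (additive in each argument, with B(r·x, y) = σ(r)·B(x,y) and B(x, r·y) = r·B(x,y) for all r ∈ R). Suppose (B₁,…,Bₙ) is an R-basis of L, k is a nonzero integer, and c_{ij} are integers (1 ≤ i,j ≤ n) such that B(Bᵢ,Bᵢ) = 1 + c_{ii}·q^k for all i, and B(Bᵢ,Bⱼ) = B(Bⱼ,Bᵢ) = c_{ij}·q^k for all i ≠ j. Then every x ∈ L with B(x,x) = 1 + c·q^k for some integer c satisfies x = q^m·Bᵢ or x = −q^m·Bᵢ for some index i and some m ∈ ℤ; in particular, x is a unit multiple of one of the basis vectors, so such a basis is unique up to permutation and multiplication by units. -/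
open LaurentPolynomial

/-!
Write `x = ∑ rᵢ • bᵢ`. Sesquilinearity gives `B x x = S + q^k P` with `S = ∑ σ(rᵢ) rᵢ` and
`P = ∑ σ(rᵢ) c_{ij} rⱼ`, both bar-invariant because `c` is symmetric. Applying `σ` to
`S + q^k P = 1 + c q^k` gives the same identity with `q^{-k}`, and since `q^k ≠ q^{-k}` this
forces `S = 1`. The constant term of `σ(r) r` is the sum of the squares of the coefficients of `r`,
so `S = 1` says that the `rᵢ` together have exactly one nonzero coefficient, and it is `±1`.
-/

theorem Finset.exists_eq_one_of_sum_eq_one {ι : Type*} {s : Finset ι} {f : ι → ℤ}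
    (hf : ∀ i ∈ s, 0 ≤ f i) (h : ∑ i ∈ s, f i = 1) :
    ∃ i ∈ s, f i = 1 ∧ ∀ j ∈ s, j ≠ i → f j = 0 := by
  classical
  obtain ⟨i, hi, hfi⟩ : ∃ i ∈ s, f i ≠ 0 := by
    by_contra! h0
    rw [Finset.sum_eq_zero h0] at h
    exact zero_ne_one h
  have hf' : ∀ j ∈ s.erase i, 0 ≤ f j := fun j hj => hf j (Finset.mem_of_mem_erase hj)
  have hsplit := Finset.add_sum_erase s f hi
  have hrest := Finset.sum_nonneg hf'
  have hfi_nonneg := hf i hi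
  refine ⟨i, hi, by omega, fun j hj hji => ?_⟩
  exact (Finset.sum_eq_zero_iff_of_nonneg hf').mp (by omega) j (Finset.mem_erase.mpr ⟨hji, hj⟩)

namespace LaurentPolynomial

theorem coeff_zero_invert_mul_self {R : Type*} [CommSemiring R] (p : R[T;T⁻¹]) :
    (invert p * p).coeff 0 = ∑ n ∈ p.coeff.support, p.coeff n ^ 2 := by
  classical
  rw [mul_comm, AddMonoidAlgebra.coeff_mul, Finsupp.sum]
  refine Finset.sum_congr rfl fun n hn => ?_
  simp_rw [add_eq_zero_iff_eq_neg']
  rw [Finsupp.sum_ite_eq']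
  simp_all [sq]

theorem T_injective {R : Type*} [Semiring R] [Nontrivial R] :
    Function.Injective (T : ℤ → R[T;T⁻¹]) := fun m n h => by
  simpa using congrArg (fun p => p.coeff n) h

theorem map_T_of_map_T_one {σ : ℤ[T;T⁻¹] →+* ℤ[T;T⁻¹]} (hσ : σ (T 1) = T (-1)) (n : ℤ) :
    σ (T n) = T (-n) := by
  have hσ' : σ (T (-1)) = T 1 := by
    calc σ (T (-1)) = σ (T (-1)) * σ (T 1) * T 1 := by
            rw [hσ, mul_assoc, ← T_add, neg_add_cancel, T_zero, mul_one]
      _ = T 1 := by rw [← map_mul, ← T_add, neg_add_cancel, T_zero, map_one, one_mul]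
  induction n using Int.induction_on with
  | zero => simp [T_zero]
  | succ n ih => rw [T_add, map_mul, ih, hσ, ← T_add, neg_add]
  | pred n ih => rw [T_sub, map_mul, ih, hσ', ← T_add]; congr 1; ring

theorem apply_eq_invert_of_map_T_one {σ : ℤ[T;T⁻¹] →+* ℤ[T;T⁻¹]} (hσ : σ (T 1) = T (-1))
    (p : ℤ[T;T⁻¹]) : σ p = invert p := by
  induction p using LaurentPolynomial.induction_on' with
  | add p q hp hq => rw [map_add, map_add, hp, hq]
  | C_mul_T n a =>
    rw [map_mul, map_mul, invert_C, invert_T, map_T_of_map_T_one hσ, eq_intCast C, map_intCast]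

section OrderedRing

variable {R : Type*} [CommRing R] [LinearOrder R] [IsStrictOrderedRing R]

theorem coeff_zero_invert_mul_self_nonneg (p : R[T;T⁻¹]) : 0 ≤ (invert p * p).coeff 0 := by
  rw [coeff_zero_invert_mul_self]
  exact Finset.sum_nonneg fun n _ => sq_nonneg _

theorem coeff_zero_invert_mul_self_eq_zero_iff {p : R[T;T⁻¹]} :
    (invert p * p).coeff 0 = 0 ↔ p = 0 := by
  refine ⟨fun h => ?_, fun h => by simp [h]⟩
  rw [coeff_zero_invert_mul_self, Finset.sum_eq_zero_iff_of_nonneg fun n _ => sq_nonneg _] at h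
  ext n
  by_cases hn : n ∈ p.coeff.support
  · simpa using h n hn
  · simpa using hn

end OrderedRing

theorem exists_T_of_coeff_zero_invert_mul_self_eq_one {p : ℤ[T;T⁻¹]}
    (h : (invert p * p).coeff 0 = 1) : ∃ m, p = T m ∨ p = -T m := by
  rw [coeff_zero_invert_mul_self] at h
  obtain ⟨m, -, hm, hrest⟩ := Finset.exists_eq_one_of_sum_eq_one (fun n _ => sq_nonneg _) h
  have hp : p = C (p.coeff m) * T m := by
    ext n
    rw [← single_eq_C_mul_T, AddMonoidAlgebra.coeff_single]
    by_cases hnm : n = m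
    · simp [hnm]
    · by_cases hn : n ∈ p.coeff.support
      · simpa [Ne.symm hnm] using hrest n hn hnm
      · simpa [Ne.symm hnm] using hn
  refine ⟨m, ?_⟩
  rcases mul_self_eq_one_iff.mp (by rwa [sq] at hm) with h1 | h1
  · left; rw [hp, h1, map_one, one_mul]
  · right; rw [hp, h1, map_neg, map_one, neg_one_mul]

theorem exists_T_of_sum_invert_mul_self_eq_one {ι : Type*} {s : Finset ι}
    {r : ι → ℤ[T;T⁻¹]} (h : ∑ i ∈ s, invert (r i) * r i = 1) :
    ∃ i ∈ s, (∃ m, r i = T m ∨ r i = -T m) ∧ ∀ j ∈ s, j ≠ i → r j = 0 := by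
  have h0 : ∑ i ∈ s, (invert (r i) * r i).coeff 0 = 1 := by
    simpa using congrArg (fun p => p.coeff 0) h
  obtain ⟨i, hi, h1, hrest⟩ := Finset.exists_eq_one_of_sum_eq_one
    (fun i _ => coeff_zero_invert_mul_self_nonneg (r i)) h0
  exact ⟨i, hi, exists_T_of_coeff_zero_invert_mul_self_eq_one h1,
    fun j hj hji => coeff_zero_invert_mul_self_eq_zero_iff.mp (hrest j hj hji)⟩

theorem eq_and_eq_of_add_T_mul_eq_add_T_mul {R : Type*} [CommRing R] [IsDomain R]
    {S P S' P' : R[T;T⁻¹]} {k : ℤ} (hk : k ≠ 0) (hS : invert S = S) (hP : invert P = P)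
    (hS' : invert S' = S') (hP' : invert P' = P') (h : S + T k * P = S' + T k * P') :
    S = S' ∧ P = P' := by
  have h' : S + T (-k) * P = S' + T (-k) * P' := by
    simpa [hS, hP, hS', hP'] using congrArg invert h
  have hTk : (T k : R[T;T⁻¹]) - T (-k) ≠ 0 := sub_ne_zero.mpr (T_injective.ne (by omega))
  have hPP' : P = P' := by
    refine sub_eq_zero.mp ((mul_eq_zero.mp ?_).resolve_left hTk)
    linear_combination h - h'
  exact ⟨by linear_combination h - T k * hPP', hPP'⟩

theorem invert_sum_sum_invert_mul_mul {R : Type*} [CommSemiring R] {ι : Type*} [Fintype ι]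
    {A : ι → ι → R[T;T⁻¹]} (hA : ∀ i j, invert (A i j) = A j i) (r : ι → R[T;T⁻¹]) :
    invert (∑ i, ∑ j, invert (r i) * A i j * r j) = ∑ i, ∑ j, invert (r i) * A i j * r j := by
  simp only [map_sum, map_mul, involutive_invert _, hA]
  rw [Finset.sum_comm]
  exact Fintype.sum_congr _ _ fun i => Fintype.sum_congr _ _ fun j => by ring

end LaurentPolynomial

theorem LinearMap.apply_eq_sum_sum_repr {ι R M : Type*} [Fintype ι] [CommSemiring R]
    [AddCommMonoid M] [Module R M] {σ : R →+* R} (b : Module.Basis ι R M)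
    (B : M →ₛₗ[σ] M →ₗ[R] R) (x y : M) :
    B x y = ∑ i, ∑ j, σ (b.repr x i) * b.repr y j * B (b i) (b j) := by
  rw [← LinearMap.sum_repr_mul_repr_mulₛₗ b b x y]
  simp [Finsupp.sum_fintype, mul_assoc]

/-- rigidity lemma for `q`-lattices.  Let `L` be a finitely generated
free module over `R = ℤ[q,q⁻¹]` of rank `n`, with a `σ`-sesquilinear form `B` (where `σ`
is the bar involution, the ring homomorphism determined by `σ(q) = q⁻¹`).  Suppose
`(b₁,…,bₙ)` is an `R`-basis, `k` is a nonzero integer and `c i j` are integers with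
`B(bᵢ,bᵢ) = 1 + c i i · q^k` and `B(bᵢ,bⱼ) = B(bⱼ,bᵢ) = c i j · q^k` for `i ≠ j`.
Then every `x ∈ L` with `B(x,x) = 1 + c·q^k` for some integer `c` is of the form
`± q^m · bᵢ`. -/
theorem stmt1 (n : ℕ)
    (σ : LaurentPolynomial ℤ →+* LaurentPolynomial ℤ)
    (hσ : σ (T 1) = T (-1))
    (L : Type) [AddCommGroup L] [Module (LaurentPolynomial ℤ) L]
    (B : L → L → LaurentPolynomial ℤ)
    (hBaddl : ∀ x x' y, B (x + x') y = B x y + B x' y)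
    (hBaddr : ∀ x y y', B x (y + y') = B x y + B x y')
    (hBsmull : ∀ (r : LaurentPolynomial ℤ) (x y), B (r • x) y = σ r * B x y)
    (hBsmulr : ∀ (r : LaurentPolynomial ℤ) (x y), B x (r • y) = r * B x y)
    (b : Module.Basis (Fin n) (LaurentPolynomial ℤ) L)
    (k : ℤ) (hk : k ≠ 0) (c : Fin n → Fin n → ℤ)
    (hdiag : ∀ i, B (b i) (b i) = 1 + (c i i : LaurentPolynomial ℤ) * T k)
    (hoff : ∀ i j, i ≠ j →
      B (b i) (b j) = (c i j : LaurentPolynomial ℤ) * T k ∧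
      B (b j) (b i) = (c i j : LaurentPolynomial ℤ) * T k)
    (x : L) (cx : ℤ)
    (hx : B x x = 1 + (cx : LaurentPolynomial ℤ) * T k) :
    ∃ (i : Fin n) (m : ℤ), x = (T m : LaurentPolynomial ℤ) • b i ∨ x = -((T m : LaurentPolynomial ℤ) • b i) := by
  classical
  set r := b.repr x
  have hgram : ∀ i j, B (b i) (b j) = (if i = j then 1 else 0) + T k * (c i j : ℤ[T;T⁻¹]) := by
    intro i j
    split_ifs with hij
    · rw [hij, hdiag, mul_comm]
    · rw [(hoff i j hij).1, zero_add, mul_comm]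
  have hc : ∀ i j, invert (c i j : ℤ[T;T⁻¹]) = c j i := by
    intro i j
    rw [map_intCast]
    rcases eq_or_ne i j with rfl | hij
    · rfl
    · exact (isUnit_T k).mul_right_cancel ((hoff i j hij).2.symm.trans (hoff j i hij.symm).1)
  have hexpand : B x x = ∑ i, invert (r i) * r i + T k * ∑ i, ∑ j, invert (r i) * c i j * r j := by
    rw [show B x x = LinearMap.mk₂'ₛₗ σ (RingHom.id _) B hBaddl hBsmull hBaddr hBsmulr x x from rfl,
      LinearMap.apply_eq_sum_sum_repr b]
    simp only [LinearMap.mk₂'ₛₗ_apply, hgram, apply_eq_invert_of_map_T_one hσ, mul_add, mul_ite,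
      mul_one, mul_zero, Finset.sum_add_distrib, Finset.sum_ite_eq, Finset.mem_univ, if_true,
      Finset.mul_sum]
    exact congrArg _ (Fintype.sum_congr _ _ fun i => Fintype.sum_congr _ _ fun j => by ring)
  obtain ⟨hS, -⟩ := eq_and_eq_of_add_T_mul_eq_add_T_mul hk
    (by simp [map_sum, involutive_invert _, mul_comm]) (invert_sum_sum_invert_mul_mul hc r)
    (map_one _) (map_intCast _ cx) (hexpand.symm.trans (hx.trans (by ring)))
  obtain ⟨i, -, ⟨m, hm⟩, hzero⟩ := exists_T_of_sum_invert_mul_self_eq_one hS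
  have hx_eq : x = r i • b i := by
    rw [← b.sum_repr x]
    exact Finset.sum_eq_single i (fun j _ hji => by rw [hzero j (Finset.mem_univ j) hji, zero_smul])
      (by simp)
  refine ⟨i, m, ?_⟩
  rcases hm with hm | hm
  · exact Or.inl (by rw [hx_eq, hm])
  · exact Or.inr (by rw [hx_eq, hm, neg_smul])
end

section
/- Let L be a unimodular q-lattice and let L₁, L₂ ⊆ L be R-submodules such that: the quotient modules L/L₁ and L/L₂ are free R-modules; the restriction of B_K to K·L₁ is nondegenerate and the restriction of B_K to K·L₂ is nondegenerate; L₂ = {x ∈ L : B(v,x) = 0 for all v ∈ L₁}; and L₁ = {x ∈ L : B(x,v) = 0 for all v ∈ L₂}. Then the quotient R-modules L₁^∨/L₁ and ^∨L₂/L₂ are isomorphic (both are isomorphic to L/(L₁ ⊕ L₂)). -/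
open LaurentPolynomial

instance : IsDomain (LaurentPolynomial ℤ) := NoZeroDivisors.to_isDomain _

/-!
Write `U₁ = K·L₁`. The right orthogonal of `U₁` is `U₂ = K·L₂` (clear denominators and use
`L₂ = L ∩ U₁^⊥`), and nondegeneracy on `U₂` makes `V = U₁ ⊕ U₂`. Let `p` be the projection onto
`U₁` along `U₂`. Since `B(v, p x) = B(v, x)` for `v ∈ U₁`, the lattice `M = p(L)` lies in `L₁^∨`,
and `M ≅ L/L₂` is free. Conversely, the vectors of `U₁` left-dual to an `R`-basis of `M` pair
integrally with `L` (through `p`), so lie in `L` by left unimodularity, hence in `L₁`, and pairing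
against them shows `L₁^∨ ⊆ M`. Thus `L₁^∨/L₁ = p(L)/L₁ ≅ L/(L₁ ⊕ L₂)`, because for `x ∈ L` we
have `p x ∈ L₁` iff `x ∈ L₁ ⊕ L₂`. Left unimodularity of `L` follows from right unimodularity via
a dual basis, and the statement for `^∨L₂` is the same statement for the form `σ(B(y, x))`.
-/

open Submodule

theorem LaurentPolynomial.ringHom_ext_int {S : Type*} [Ring S] {f g : ℤ[T;T⁻¹] →+* S}
    (h : f (T 1) = g (T 1)) : f = g :=
  congrArg AlgHom.toRingHom <| AddMonoidAlgebra.algHom_ext' (φ₁ := f.toIntAlgHom)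
    (φ₂ := g.toIntAlgHom) (MonoidHom.ext_mint h) (Subsingleton.elim _ _)

theorem LaurentPolynomial.involutive_of_apply_T_one {σ : ℤ[T;T⁻¹] →+* ℤ[T;T⁻¹]}
    (hσ : σ (T 1) = T (-1)) : Function.Involutive σ := by
  obtain rfl : σ = invert.toRingHom := ringHom_ext_int (by simpa using hσ)
  exact involutive_invert

theorem IsFractionRing.involutive_of_apply_algebraMap {R K : Type*} [CommRing R] [Field K]
    [Algebra R K] [IsFractionRing R K] {σ : R →+* R} (hσ : Function.Involutive σ) {σK : K →+* K}
    (hσK : ∀ r, σK (algebraMap R K r) = algebraMap R K (σ r)) : Function.Involutive σK := by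
  have : σK.comp σK = RingHom.id K :=
    IsLocalization.ringHom_ext (nonZeroDivisors R) (RingHom.ext fun r ↦ by simp [hσK, hσ r])
  exact fun x ↦ DFunLike.congr_fun this x

section Sesquilinear

variable {K V : Type*} [Field K] [AddCommGroup V] [Module K V] {σK : K →+* K}
  (B : V →ₛₗ[σK] V →ₗ[K] K)

theorem mem_orthogonalBilin_span_iff {s : Set V} {y : V} :
    y ∈ (span K s).orthogonalBilin B ↔ ∀ x ∈ s, B x y = 0 :=
  ⟨fun h x hx ↦ h x (subset_span hx), fun h ↦ span_le (p := LinearMap.ker (B.flip y)) |>.2 h⟩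

theorem isCompl_orthogonalBilin [FiniteDimensional K V] {U : Submodule K V}
    (hnd : ∀ x ∈ U.orthogonalBilin B, (∀ y ∈ U.orthogonalBilin B, B x y = 0) → x = 0) :
    IsCompl U (U.orthogonalBilin B) := by
  let t := Module.finBasis K U
  let Φ : V →ₗ[K] Fin (Module.finrank K U) → K := LinearMap.pi fun i ↦ B (t i)
  have hker : LinearMap.ker Φ ≤ U.orthogonalBilin B := fun y hy x hx ↦ by
    have hvan : (B.flip y).comp U.subtype = 0 := t.ext fun i ↦ congrFun (LinearMap.mem_ker.1 hy) i
    exact LinearMap.congr_fun hvan ⟨x, hx⟩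
  have hrange : Module.finrank K (LinearMap.range Φ) ≤ Module.finrank K U := by
    simpa using (LinearMap.range Φ).finrank_le
  rw [isCompl_iff_disjoint]
  · exact disjoint_def.2 fun x hx hx' ↦ hnd x hx' fun y hy ↦ hy x hx
  · have := Φ.finrank_range_add_finrank_ker
    have := finrank_mono hker
    omega

theorem apply_projection_orthogonalBilin {U : Submodule K V}
    (hc : IsCompl U (U.orthogonalBilin B)) {v : V} (hv : v ∈ U) (x : V) :
    B v (U.projection _ hc x) = B v x := by
  have h : x - U.projection _ hc x ∈ U.orthogonalBilin B :=
    projection_eq_self_sub_projection hc x ▸ projection_apply_mem _ _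
  rw [← sub_eq_zero, ← map_sub, ← neg_sub, map_neg, h v hv, neg_zero]

theorem separatingRight_of_det_ne_zero {ι : Type*} [Fintype ι] [DecidableEq ι]
    (b : Module.Basis ι K V) (h : (Matrix.of fun i j ↦ B (b i) (b j)).det ≠ 0) :
    B.SeparatingRight := by
  intro y hy
  have hc : (Matrix.of fun i j ↦ B (b i) (b j)).mulVec (b.repr y) = 0 := funext fun i ↦ by
    conv_rhs => rw [Pi.zero_apply, ← hy (b i), ← b.sum_repr y, map_sum]
    simp [Matrix.mulVec, dotProduct, mul_comm]
  simpa using Matrix.eq_zero_of_mulVec_eq_zero h hc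

def conjFlip (hσ : Function.Involutive σK) : V →ₛₗ[σK] V →ₗ[K] K :=
  LinearMap.mk₂'ₛₗ σK (RingHom.id K) (fun x y ↦ σK (B y x))
    (fun _ _ _ ↦ by simp) (fun _ _ _ ↦ by simp) (fun _ _ _ ↦ by simp)
    (fun c _ _ ↦ by simp [hσ c])

@[simp]
theorem conjFlip_apply (hσ : Function.Involutive σK) (x y : V) :
    conjFlip B hσ x y = σK (B y x) := rfl

theorem exists_rightDualFamily {ι : Type*} [Finite ι] [DecidableEq ι] {e : ι → V}
    (he : LinearIndependent K e)
    (hnd : ∀ y ∈ span K (Set.range e), (∀ x ∈ span K (Set.range e), B x y = 0) → y = 0) :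
    ∃ f : ι → V, (∀ k, f k ∈ span K (Set.range e)) ∧
      ∀ j k, B (e j) (f k) = if j = k then 1 else 0 := by
  have := Fintype.ofFinite ι
  let U := span K (Set.range e)
  let Φ : U →ₗ[K] ι → K := (LinearMap.pi fun j ↦ B (e j)).comp U.subtype
  have hinj : Function.Injective Φ := by
    rw [← LinearMap.ker_eq_bot, eq_bot_iff]
    intro y hy
    refine Subtype.ext <| hnd y y.2 fun x hx ↦ (mem_orthogonalBilin_span_iff B).2 ?_ x hx
    simpa [Φ] using congrFun (LinearMap.mem_ker.1 hy)
  have : FiniteDimensional K U := .span_of_finite K (Set.finite_range e)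
  have hsurj : Function.Surjective Φ :=
    (LinearMap.injective_iff_surjective_of_finrank_eq_finrank (by
      rw [finrank_span_eq_card he, Module.finrank_fintype_fun_eq_card])).1 hinj
  choose f hf using fun k ↦ hsurj (Pi.single k 1)
  exact ⟨fun k ↦ f k, fun k ↦ (f k).2, fun j k ↦ (congrFun (hf k) j).trans (Pi.single_apply k 1 j)⟩

theorem exists_leftDualFamily (hσ : Function.Involutive σK) {ι : Type*} [Finite ι] [DecidableEq ι]
    {e : ι → V} (he : LinearIndependent K e)
    (hnd : ∀ x ∈ span K (Set.range e), (∀ y ∈ span K (Set.range e), B x y = 0) → x = 0) :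
    ∃ f : ι → V, (∀ k, f k ∈ span K (Set.range e)) ∧
      ∀ j k, B (f k) (e j) = if j = k then 1 else 0 := by
  obtain ⟨f, hfe, hf⟩ := exists_rightDualFamily (conjFlip B hσ) he fun y hy h ↦
    hnd y hy fun x hx ↦ by simpa using h x hx
  refine ⟨f, hfe, fun j k ↦ ?_⟩
  rw [← hσ (B (f k) (e j)), ← conjFlip_apply B hσ, hf, MonoidWithZeroHom.map_ite_one_zero]

theorem leftDualFamily_apply_sum {ι : Type*} [Fintype ι] [DecidableEq ι] {e f : ι → V}
    (hf : ∀ j k, B (f k) (e j) = if j = k then 1 else 0) (d : ι → K) (k : ι) :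
    B (f k) (∑ j, d j • e j) = d k := by
  simp [hf]

end Sesquilinear

section Lattice

variable {R K V : Type*} [CommRing R] [Field K] [Algebra R K]
  [AddCommGroup V] [Module K V] [Module R V] [IsScalarTower R K V] {σK : K →+* K}
  (B : V →ₛₗ[σK] V →ₗ[K] K)

def rightDual (N : Submodule R V) : Submodule R V where
  carrier := {x | x ∈ span K (N : Set V) ∧ ∀ v ∈ N, B v x ∈ (algebraMap R K).range}
  add_mem' hx hy := ⟨add_mem hx.1 hy.1, fun v hv ↦ by
    rw [map_add]; exact add_mem (hx.2 v hv) (hy.2 v hv)⟩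
  zero_mem' := ⟨zero_mem _, fun v _ ↦ by simp⟩
  smul_mem' r x hx := ⟨(span K _).smul_of_tower_mem r hx.1, fun v hv ↦ by
    rw [← algebraMap_smul K r x, map_smul, smul_eq_mul]; exact mul_mem ⟨r, rfl⟩ (hx.2 v hv)⟩

theorem conj_mem_range_iff (hσR : ∀ r, σK (algebraMap R K r) ∈ (algebraMap R K).range)
    (hσ : Function.Involutive σK) {a : K} :
    σK a ∈ (algebraMap R K).range ↔ a ∈ (algebraMap R K).range := by
  refine ⟨fun ⟨r, hr⟩ ↦ ?_, fun ⟨r, hr⟩ ↦ hr ▸ hσR r⟩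
  rw [← hσ a, ← hr]
  exact hσR r

theorem coe_rightDual_conjFlip (hσR : ∀ r, σK (algebraMap R K r) ∈ (algebraMap R K).range)
    (hσ : Function.Involutive σK) (N : Submodule R V) :
    (rightDual (conjFlip B hσ) N : Set V) =
      {x | x ∈ span K (N : Set V) ∧ ∀ v ∈ N, B x v ∈ (algebraMap R K).range} := by
  ext x
  simp [rightDual, conj_mem_range_iff hσR hσ]

theorem span_range_coe_basis {ι : Type*} (M : Submodule R V) (e : Module.Basis ι R M) :
    span R (Set.range fun i ↦ (e i : V)) = M := by
  rw [Set.range_comp' Subtype.val e, ← M.coe_subtype, span_image, e.span_eq, map_subtype_top]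

theorem leftDualFamily_apply_eq_repr {ι : Type*} [Finite ι] [DecidableEq ι] {M : Submodule R V}
    (e : Module.Basis ι R M) {f : ι → V} (hf : ∀ j k, B (f k) (e j) = if j = k then 1 else 0)
    (m : M) (k : ι) : B (f k) m = algebraMap R K (e.repr m k) := by
  have := Fintype.ofFinite ι
  have hm : (m : V) = ∑ j, algebraMap R K (e.repr m j) • (e j : V) := by
    simp_rw [algebraMap_smul]
    conv_lhs => rw [← e.sum_repr m]
    simp only [coe_sum, coe_smul]
  rw [hm]
  exact leftDualFamily_apply_sum B hf _ k

theorem rightDual_le_of_leftDualFamily {ι : Type*} [Finite ι] [DecidableEq ι]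
    {N M : Submodule R V} (e : Module.Basis ι R M) {f : ι → V}
    (hf : ∀ j k, B (f k) (e j) = if j = k then 1 else 0) (hfN : ∀ k, f k ∈ N)
    (hNM : span K (N : Set V) ≤ span K (M : Set V)) : rightDual B N ≤ M := by
  have := Fintype.ofFinite ι
  rintro y ⟨hyN, hyR⟩
  rw [← span_range_coe_basis M e, span_span_of_tower] at hNM
  obtain ⟨d, rfl⟩ := (mem_span_range_iff_exists_fun K).1 (hNM hyN)
  choose r hr using fun k ↦ leftDualFamily_apply_sum B hf d k ▸ hyR (f k) (hfN k)
  simp_rw [← hr, algebraMap_smul]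
  exact sum_mem fun j _ ↦ M.smul_mem _ (e j).2

variable [IsDomain R] [IsFractionRing R K]

theorem leftUnimodular_of_rightUnimodular
    (hσR : ∀ r, σK (algebraMap R K r) ∈ (algebraMap R K).range) (hσ : Function.Involutive σK)
    {ι : Type*} [Fintype ι] [DecidableEq ι] (b : Module.Basis ι K V) (hB : B.SeparatingRight)
    (huni : ∀ x, (∀ v ∈ span R (Set.range b), B v x ∈ (algebraMap R K).range) →
      x ∈ span R (Set.range b))
    (x : V) (hx : ∀ v ∈ span R (Set.range b), B x v ∈ (algebraMap R K).range) :
    x ∈ span R (Set.range b) := by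
  obtain ⟨f, -, hf⟩ := exists_rightDualFamily B b.linearIndependent fun y _ hy ↦
    hB y fun x ↦ hy x (b.span_eq ▸ mem_top)
  have hf' : ∀ j k, conjFlip B hσ (f k) (b j) = if j = k then 1 else 0 := by simp [hf]
  have hfL : ∀ k, f k ∈ span R (Set.range b) := fun k ↦ huni _ fun v hv ↦ by
    have hb : ∀ j k, conjFlip B hσ (f k) (b.restrictScalars R j) = if j = k then 1 else 0 := by
      simpa using hf'
    rw [← conj_mem_range_iff hσR hσ, ← conjFlip_apply B hσ,
      leftDualFamily_apply_eq_repr (conjFlip B hσ) (b.restrictScalars R) hb ⟨v, hv⟩]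
    exact ⟨_, rfl⟩
  refine (b.mem_span_iff_repr_mem R x).2 fun k ↦ ?_
  have := leftDualFamily_apply_sum (conjFlip B hσ) hf' (b.repr x) k
  rw [b.sum_repr, conjFlip_apply] at this
  exact this ▸ (conj_mem_range_iff hσR hσ).2 (hx _ (hfL k))

theorem exists_smul_mem_span_basis {ι : Type*} [Finite ι] (b : Module.Basis ι K V) (x : V) :
    ∃ r ∈ nonZeroDivisors R, r • x ∈ span R (Set.range b) := by
  obtain ⟨r, hr⟩ := IsLocalization.exist_integer_multiples_of_finite (nonZeroDivisors R) (b.repr x)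
  refine ⟨r, r.2, (b.mem_span_iff_repr_mem R _).2 fun i ↦ ?_⟩
  rw [← algebraMap_smul K (r : R) x, map_smul, Finsupp.smul_apply, algebraMap_smul]
  exact hr i

theorem span_eq_orthogonalBilin {ι : Type*} [Finite ι]
    (b : Module.Basis ι K V) {L L₁ L₂ : Submodule R V} (hL : L = span R (Set.range b))
    (hOrth₂ : (L₂ : Set V) = {x | x ∈ L ∧ ∀ v ∈ L₁, B v x = 0}) :
    span K (L₂ : Set V) = (span K (L₁ : Set V)).orthogonalBilin B := by
  refine le_antisymm (span_le.2 fun x hx ↦ ?_) fun y hy ↦ ?_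
  · rw [hOrth₂] at hx
    exact (mem_orthogonalBilin_span_iff B).2 hx.2
  · obtain ⟨r, hr, hry⟩ := exists_smul_mem_span_basis (R := R) b y
    have hry₂ : r • y ∈ (L₂ : Set V) := by
      rw [hOrth₂]
      refine ⟨hL ▸ hry, fun v hv ↦ ?_⟩
      rw [← algebraMap_smul K r y, map_smul, hy v (subset_span hv), smul_zero]
    rw [← smul_mem_iff _ (IsFractionRing.to_map_ne_zero_of_mem_nonZeroDivisors (K := K) hr),
      algebraMap_smul]
    exact subset_span hry₂

end Lattice

section Gluing

variable {R K V : Type*} [CommRing R] [Field K] [AddCommGroup V] [Module K V] [Module R V]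
  {σK : K →+* K} (B : V →ₛₗ[σK] V →ₗ[K] K) {L L₁ L₂ : Submodule R V}
  (hc : IsCompl (span K (L₁ : Set V)) ((span K (L₁ : Set V)).orthogonalBilin B))

theorem mem_iff_projection_eq_zero
    (hOrth₂ : (L₂ : Set V) = {x | x ∈ L ∧ ∀ v ∈ L₁, B v x = 0}) {x : V} (hx : x ∈ L) :
    x ∈ L₂ ↔ (span K (L₁ : Set V)).projection _ hc x = 0 := by
  rw [projection_apply_eq_zero_iff, mem_orthogonalBilin_span_iff, ← SetLike.mem_coe, hOrth₂]
  exact and_iff_right hx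

theorem projection_mem_iff_mem_sup
    (hOrth₂ : (L₂ : Set V) = {x | x ∈ L ∧ ∀ v ∈ L₁, B v x = 0}) (h₁L : L₁ ≤ L) (h₂L : L₂ ≤ L)
    {x : V} (hx : x ∈ L) : (span K (L₁ : Set V)).projection _ hc x ∈ L₁ ↔ x ∈ L₁ ⊔ L₂ := by
  set p := (span K (L₁ : Set V)).projection _ hc
  have hp : ∀ a ∈ L₁, p a = a := fun a ha ↦ projection_apply_of_mem_left hc (subset_span ha)
  constructor
  · intro h
    have hrest : x - p x ∈ L₂ := by
      rw [mem_iff_projection_eq_zero B hc hOrth₂ (sub_mem hx (h₁L h)), map_sub, hp _ h, sub_self]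
    exact mem_sup.2 ⟨p x, h, x - p x, hrest, add_sub_cancel _ _⟩
  · intro h
    obtain ⟨a, ha, c, hc', rfl⟩ := mem_sup.1 h
    rwa [map_add, hp a ha, (mem_iff_projection_eq_zero B hc hOrth₂ (h₂L hc')).1 hc', add_zero]

variable [Algebra R K] [IsScalarTower R K V]

theorem module_free_map_projection
    (hOrth₂ : (L₂ : Set V) = {x | x ∈ L ∧ ∀ v ∈ L₁, B v x = 0})
    [Module.Free R (L ⧸ L₂.comap L.subtype)] :
    Module.Free R (L.map (((span K (L₁ : Set V)).projection _ hc).restrictScalars R)) := by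
  let P := ((span K (L₁ : Set V)).projection _ hc).restrictScalars R
  let g := P.comp L.subtype
  have hker : LinearMap.ker g = L₂.comap L.subtype := by
    ext ⟨x, hx⟩
    exact (mem_iff_projection_eq_zero B hc hOrth₂ hx).symm
  have hrange : LinearMap.range g = L.map P := by rw [LinearMap.range_comp, range_subtype]
  exact .of_equiv <|
    (quotEquivOfEq _ _ hker.symm).trans g.quotKerEquivRange |>.trans (.ofEq _ _ hrange)

theorem nonempty_quotient_map_projection_equiv
    (hOrth₂ : (L₂ : Set V) = {x | x ∈ L ∧ ∀ v ∈ L₁, B v x = 0}) (h₁L : L₁ ≤ L) (h₂L : L₂ ≤ L) :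
    let M := L.map (((span K (L₁ : Set V)).projection _ hc).restrictScalars R)
    Nonempty ((M ⧸ L₁.comap M.subtype) ≃ₗ[R] L ⧸ (L₁ ⊔ L₂).comap L.subtype) := by
  intro M
  let P := ((span K (L₁ : Set V)).projection _ hc).restrictScalars R
  let f := (L₁.comap M.subtype).mkQ ∘ₗ P.submoduleMap L
  have hsurj : Function.Surjective f := (mkQ_surjective _).comp (P.submoduleMap_surjective L)
  have hker : LinearMap.ker f = (L₁ ⊔ L₂).comap L.subtype := by
    ext ⟨x, hx⟩
    simp only [f, LinearMap.mem_ker, LinearMap.comp_apply, mkQ_apply, Quotient.mk_eq_zero,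
      mem_comap, subtype_apply]
    exact projection_mem_iff_mem_sup B hc hOrth₂ h₁L h₂L hx
  exact ⟨((quotEquivOfEq _ _ hker.symm).trans (f.quotKerEquivOfSurjective hsurj)).symm⟩

theorem map_projection_le_rightDual (hLint : ∀ x ∈ L, ∀ y ∈ L, B x y ∈ (algebraMap R K).range)
    (h₁L : L₁ ≤ L) :
    L.map (((span K (L₁ : Set V)).projection _ hc).restrictScalars R) ≤ rightDual B L₁ := by
  rintro _ ⟨x, hx, rfl⟩
  refine ⟨projection_apply_mem hc x, fun v hv ↦ ?_⟩
  rw [LinearMap.restrictScalars_apply, apply_projection_orthogonalBilin B hc (subset_span hv)]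
  exact hLint v (h₁L hv) x hx

theorem rightDual_le_map_projection [IsDomain R] [IsFractionRing R K] [FiniteDimensional K V]
    (hσ : Function.Involutive σK) (hLuni : ∀ x, (∀ v ∈ L, B x v ∈ (algebraMap R K).range) → x ∈ L)
    (h₁L : L₁ ≤ L)
    [Module.Free R (L.map (((span K (L₁ : Set V)).projection _ hc).restrictScalars R))]
    (hnd₁ : ∀ x ∈ span K (L₁ : Set V), (∀ y ∈ span K (L₁ : Set V), B x y = 0) → x = 0)
    (hOrth₂ : (L₂ : Set V) = {x | x ∈ L ∧ ∀ v ∈ L₁, B v x = 0})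
    (hOrth₁ : (L₁ : Set V) = {x | x ∈ L ∧ ∀ v ∈ L₂, B x v = 0}) :
    rightDual B L₁ ≤ L.map (((span K (L₁ : Set V)).projection _ hc).restrictScalars R) := by
  classical
  set M := L.map (((span K (L₁ : Set V)).projection _ hc).restrictScalars R)
  let e := Module.Free.chooseBasis R M
  have hM : span K (M : Set V) = span K (L₁ : Set V) := by
    refine le_antisymm (span_le.2 ?_) (span_mono fun a ha ↦ ?_)
    · rintro _ ⟨x, -, rfl⟩
      exact projection_apply_mem hc x
    · exact ⟨a, h₁L ha, projection_apply_of_mem_left hc (subset_span ha)⟩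
  have he : LinearIndependent K fun i ↦ (e i : V) :=
    (LinearIndependent.iff_fractionRing R K).1 (e.linearIndependent.map' M.subtype M.ker_subtype)
  have hspan : span K (Set.range fun i ↦ (e i : V)) = span K (L₁ : Set V) := by
    rw [← span_span_of_tower R, span_range_coe_basis, hM]
  have := he.finite_of_isNoetherian
  obtain ⟨f, hfU, hf⟩ := exists_leftDualFamily B hσ he (hspan ▸ hnd₁)
  replace hfU : ∀ k, f k ∈ span K (L₁ : Set V) := hspan ▸ hfU
  refine rightDual_le_of_leftDualFamily B e hf (fun k ↦ ?_) hM.ge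
  have hfL : f k ∈ L := hLuni _ fun v hv ↦ by
    rw [← apply_projection_orthogonalBilin B hc (hfU k)]
    exact ⟨_, (leftDualFamily_apply_eq_repr B e hf ⟨_, mem_map_of_mem hv⟩ k).symm⟩
  rw [← SetLike.mem_coe, hOrth₁]
  refine ⟨hfL, fun v hv ↦ ?_⟩
  rw [← SetLike.mem_coe, hOrth₂] at hv
  exact (mem_orthogonalBilin_span_iff B).2 hv.2 (f k) (hfU k)

theorem nonempty_rightDual_quotient_equiv [IsDomain R] [IsFractionRing R K]
    (hσ : Function.Involutive σK) {ι : Type*} [Fintype ι] (b : Module.Basis ι K V)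
    (hL : L = span R (Set.range b))
    (hLint : ∀ x ∈ L, ∀ y ∈ L, B x y ∈ (algebraMap R K).range)
    (hLuni : ∀ x, (∀ v ∈ L, B x v ∈ (algebraMap R K).range) → x ∈ L)
    (h₁L : L₁ ≤ L) (h₂L : L₂ ≤ L) [Module.Free R (L ⧸ L₂.comap L.subtype)]
    (hnd₁ : ∀ x ∈ span K (L₁ : Set V), (∀ y ∈ span K (L₁ : Set V), B x y = 0) → x = 0)
    (hnd₂ : ∀ x ∈ span K (L₂ : Set V), (∀ y ∈ span K (L₂ : Set V), B x y = 0) → x = 0)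
    (hOrth₂ : (L₂ : Set V) = {x | x ∈ L ∧ ∀ v ∈ L₁, B v x = 0})
    (hOrth₁ : (L₁ : Set V) = {x | x ∈ L ∧ ∀ v ∈ L₂, B x v = 0}) :
    Nonempty ((rightDual B L₁ ⧸ L₁.comap (rightDual B L₁).subtype) ≃ₗ[R]
      L ⧸ (L₁ ⊔ L₂).comap L.subtype) := by
  have : FiniteDimensional K V := .of_basis b
  have hU₂ := span_eq_orthogonalBilin B b hL hOrth₂
  have hc := isCompl_orthogonalBilin B (hU₂ ▸ hnd₂)
  have := module_free_map_projection B hc hOrth₂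
  rw [le_antisymm (rightDual_le_map_projection B hc hσ hLuni h₁L hnd₁ hOrth₂ hOrth₁)
    (map_projection_le_rightDual B hc hLint h₁L)]
  exact nonempty_quotient_map_projection_equiv B hc hOrth₂ h₁L h₂L

theorem nonempty_rightDual_conjFlip_quotient_equiv [IsDomain R] [IsFractionRing R K]
    (hσR : ∀ r, σK (algebraMap R K r) ∈ (algebraMap R K).range) (hσ : Function.Involutive σK)
    {ι : Type*} [Fintype ι] (b : Module.Basis ι K V) (hL : L = span R (Set.range b))
    (hLint : ∀ x ∈ L, ∀ y ∈ L, B x y ∈ (algebraMap R K).range)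
    (hLuni : ∀ x, (∀ v ∈ L, B v x ∈ (algebraMap R K).range) → x ∈ L)
    (h₁L : L₁ ≤ L) (h₂L : L₂ ≤ L) [Module.Free R (L ⧸ L₁.comap L.subtype)]
    (hnd₁ : ∀ y ∈ span K (L₁ : Set V), (∀ x ∈ span K (L₁ : Set V), B x y = 0) → y = 0)
    (hnd₂ : ∀ y ∈ span K (L₂ : Set V), (∀ x ∈ span K (L₂ : Set V), B x y = 0) → y = 0)
    (hOrth₂ : (L₂ : Set V) = {x | x ∈ L ∧ ∀ v ∈ L₁, B v x = 0})
    (hOrth₁ : (L₁ : Set V) = {x | x ∈ L ∧ ∀ v ∈ L₂, B x v = 0}) :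
    Nonempty ((rightDual (conjFlip B hσ) L₂ ⧸ L₂.comap (rightDual (conjFlip B hσ) L₂).subtype) ≃ₗ[R]
      L ⧸ (L₁ ⊔ L₂).comap L.subtype) := by
  have hconj (a : K) := conj_mem_range_iff hσR hσ (a := a)
  rw [sup_comm]
  exact nonempty_rightDual_quotient_equiv (conjFlip B hσ) hσ b hL
    (fun x hx y hy ↦ (hconj _).2 (hLint y hy x hx))
    (fun x hx ↦ hLuni x fun v hv ↦ (hconj _).1 (hx v hv)) h₂L h₁L
    (fun x hx h ↦ hnd₂ x hx fun y hy ↦ by simpa using h y hy)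
    (fun x hx h ↦ hnd₁ x hx fun y hy ↦ by simpa using h y hy)
    (by simpa using hOrth₁) (by simpa using hOrth₂)

end Gluing

/-- q-lattice gluing, part 2: glue groups.  With `L`, `L₁`, `L₂` as in
the gluing setup (L unimodular, free quotients, nondegenerate restrictions, mutual
one-sided orthogonal complements), the right dual `L₁^∨` and the left dual `^∨L₂` are
`R`-submodules of `L_K`, and the quotient `R`-modules `L₁^∨/L₁` and `^∨L₂/L₂` are
isomorphic (both being isomorphic to `L/(L₁ ⊕ L₂)`). -/
theorem stmt6
    (σ : LaurentPolynomial ℤ →+* LaurentPolynomial ℤ)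
    (hσ : σ (T 1) = T (-1))
    (σK : FractionRing (LaurentPolynomial ℤ) →+* FractionRing (LaurentPolynomial ℤ))
    (hσK : ∀ r : LaurentPolynomial ℤ,
      σK (algebraMap (LaurentPolynomial ℤ) (FractionRing (LaurentPolynomial ℤ)) r)
        = algebraMap (LaurentPolynomial ℤ) (FractionRing (LaurentPolynomial ℤ)) (σ r))
    (Vs : Type) [AddCommGroup Vs] [Module (FractionRing (LaurentPolynomial ℤ)) Vs]
    [Module (LaurentPolynomial ℤ) Vs]
    [IsScalarTower (LaurentPolynomial ℤ) (FractionRing (LaurentPolynomial ℤ)) Vs]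
    (BK : Vs → Vs → FractionRing (LaurentPolynomial ℤ))
    (hBaddl : ∀ x x' y, BK (x + x') y = BK x y + BK x' y)
    (hBaddr : ∀ x y y', BK x (y + y') = BK x y + BK x y')
    (hBsmull : ∀ (c : FractionRing (LaurentPolynomial ℤ)) (x y),
      BK (c • x) y = σK c * BK x y)
    (hBsmulr : ∀ (c : FractionRing (LaurentPolynomial ℤ)) (x y),
      BK x (c • y) = c * BK x y)
    (ι : Type) [Fintype ι] [DecidableEq ι]
    (b : Module.Basis ι (FractionRing (LaurentPolynomial ℤ)) Vs)
    (hnd : (Matrix.of fun i j => BK (b i) (b j)).det ≠ 0)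
    (L : Submodule (LaurentPolynomial ℤ) Vs)
    (hL : L = Submodule.span (LaurentPolynomial ℤ) (Set.range b))
    (hRval : ∀ x ∈ L, ∀ y ∈ L, BK x y ∈
      Set.range (algebraMap (LaurentPolynomial ℤ) (FractionRing (LaurentPolynomial ℤ))))
    -- unimodularity: L equals its right dual
    (huni : {x : Vs |
        x ∈ Submodule.span (FractionRing (LaurentPolynomial ℤ)) (L : Set Vs) ∧
        ∀ v ∈ L, BK v x ∈ Set.range
          (algebraMap (LaurentPolynomial ℤ) (FractionRing (LaurentPolynomial ℤ)))}
      = (L : Set Vs))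
    (L₁ L₂ : Submodule (LaurentPolynomial ℤ) Vs) (h₁L : L₁ ≤ L) (h₂L : L₂ ≤ L)
    -- the quotients L/L₁ and L/L₂ are free R-modules
    (hfree₁ : Module.Free (LaurentPolynomial ℤ)
      (↥L ⧸ (L₁.comap L.subtype)))
    (hfree₂ : Module.Free (LaurentPolynomial ℤ)
      (↥L ⧸ (L₂.comap L.subtype)))
    -- the restriction of B_K to K·L₁ is nondegenerate
    (hnd₁l : ∀ x ∈ Submodule.span (FractionRing (LaurentPolynomial ℤ)) (L₁ : Set Vs),
      (∀ y ∈ Submodule.span (FractionRing (LaurentPolynomial ℤ)) (L₁ : Set Vs),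
        BK x y = 0) → x = 0)
    (hnd₁r : ∀ y ∈ Submodule.span (FractionRing (LaurentPolynomial ℤ)) (L₁ : Set Vs),
      (∀ x ∈ Submodule.span (FractionRing (LaurentPolynomial ℤ)) (L₁ : Set Vs),
        BK x y = 0) → y = 0)
    -- the restriction of B_K to K·L₂ is nondegenerate
    (hnd₂l : ∀ x ∈ Submodule.span (FractionRing (LaurentPolynomial ℤ)) (L₂ : Set Vs),
      (∀ y ∈ Submodule.span (FractionRing (LaurentPolynomial ℤ)) (L₂ : Set Vs),
        BK x y = 0) → x = 0)
    (hnd₂r : ∀ y ∈ Submodule.span (FractionRing (LaurentPolynomial ℤ)) (L₂ : Set Vs),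
      (∀ x ∈ Submodule.span (FractionRing (LaurentPolynomial ℤ)) (L₂ : Set Vs),
        BK x y = 0) → y = 0)
    -- L₂ is the right orthogonal complement of L₁ in L
    (hOrth₂ : (L₂ : Set Vs) = {x : Vs | x ∈ L ∧ ∀ v ∈ L₁, BK v x = 0})
    -- L₁ is the left orthogonal complement of L₂ in L
    (hOrth₁ : (L₁ : Set Vs) = {x : Vs | x ∈ L ∧ ∀ v ∈ L₂, BK x v = 0}) :
    ∃ (D₁ D₂ : Submodule (LaurentPolynomial ℤ) Vs),
      -- D₁ is the right dual L₁^∨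
      (D₁ : Set Vs) = {x : Vs |
          x ∈ Submodule.span (FractionRing (LaurentPolynomial ℤ)) (L₁ : Set Vs) ∧
          ∀ v ∈ L₁, BK v x ∈ Set.range
            (algebraMap (LaurentPolynomial ℤ) (FractionRing (LaurentPolynomial ℤ)))} ∧
      -- D₂ is the left dual ^∨L₂
      (D₂ : Set Vs) = {x : Vs |
          x ∈ Submodule.span (FractionRing (LaurentPolynomial ℤ)) (L₂ : Set Vs) ∧
          ∀ v ∈ L₂, BK x v ∈ Set.range
            (algebraMap (LaurentPolynomial ℤ) (FractionRing (LaurentPolynomial ℤ)))} ∧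
      -- L₁^∨/L₁ ≅ ^∨L₂/L₂ ...
      Nonempty ((↥D₁ ⧸ (L₁.comap D₁.subtype)) ≃ₗ[LaurentPolynomial ℤ]
        (↥D₂ ⧸ (L₂.comap D₂.subtype))) ∧
      -- ... both being isomorphic to L/(L₁ ⊕ L₂)
      Nonempty ((↥D₁ ⧸ (L₁.comap D₁.subtype)) ≃ₗ[LaurentPolynomial ℤ]
        (↥L ⧸ ((L₁ ⊔ L₂).comap L.subtype))) := by
  have hσK' : Function.Involutive σK :=
    IsFractionRing.involutive_of_apply_algebraMap (involutive_of_apply_T_one hσ) hσK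
  have hσR (r : ℤ[T;T⁻¹]) : σK (algebraMap _ _ r) ∈ (algebraMap _ (FractionRing ℤ[T;T⁻¹])).range :=
    ⟨σ r, (hσK r).symm⟩
  let B := LinearMap.mk₂'ₛₗ σK (RingHom.id _) BK hBaddl hBsmull hBaddr hBsmulr
  have huniR (x : Vs) (hx : ∀ v ∈ L, B v x ∈ (algebraMap ℤ[T;T⁻¹] (FractionRing ℤ[T;T⁻¹])).range) :
      x ∈ L :=
    huni.subset ⟨by rw [hL, span_span_of_tower, b.span_eq]; trivial, hx⟩
  have huniL := hL ▸ leftUnimodular_of_rightUnimodular B hσR hσK' b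
    (separatingRight_of_det_ne_zero B b hnd) (hL ▸ huniR)
  obtain ⟨e₁⟩ := nonempty_rightDual_quotient_equiv B hσK' b hL hRval huniL h₁L h₂L hnd₁l hnd₂l
    hOrth₂ hOrth₁
  obtain ⟨e₂⟩ := nonempty_rightDual_conjFlip_quotient_equiv B hσR hσK' b hL hRval huniR h₁L h₂L
    hnd₁r hnd₂r hOrth₂ hOrth₁
  exact ⟨_, _, rfl, coe_rightDual_conjFlip B hσR hσK' L₂, ⟨e₁.trans e₂.symm⟩, ⟨e₁⟩⟩
end

section
/- Let B be a signed bipartite graph with sets E₀, E₁ and matrix M. Then the q-Gram matrix G of B is invertible over ℤ[q,q⁻¹]; its inverse is the block matrix [[I + q²·M·Mᵗ, −q·M],[−q·Mᵗ, I]], and det G = 1. In particular, the q-lattice R^{E₀⊔E₁} with the σ-sesquilinear form ⟨x,y⟩ := ∑_{a,b} σ(x_a)·G(a,b)·y_b, obtained by gluing the q-flow and q-cut lattices of B, is unimodular. -/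
/-!
Writing `B = q•M` and `C = q•Mᵀ`, the q-Gram matrix is `[[1, B], [C, 1 + C*B]]` because
`q•Mᵀ * q•M = q²•(Mᵀ*M)`. For any rectangular `B, C` over a ring, the Schur complement of the
identity block is `(1 + C*B) - C*B = 1`, which gives `det = 1`, and a direct block computation
shows that `[[1 + B*C, -B], [-C, 1]]` is a right inverse; over a commutative ring a one-sided
inverse of a square matrix is two-sided.
-/

open LaurentPolynomial Matrix

namespace Matrix

variable {m n α : Type*} [Fintype m] [Fintype n] [DecidableEq m] [DecidableEq n]

theorem fromBlocks_one_add_mul_mul_fromBlocks_neg [Ring α] (B : Matrix m n α) (C : Matrix n m α) :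
    fromBlocks 1 B C (1 + C * B) * fromBlocks (1 + B * C) (-B) (-C) 1 = 1 := by
  simp only [fromBlocks_multiply, ← fromBlocks_one, Matrix.mul_add, Matrix.add_mul,
    Matrix.mul_neg, Matrix.mul_one, Matrix.one_mul, Matrix.mul_assoc]
  congr 1 <;> abel

theorem det_fromBlocks_one_add_mul [CommRing α] (B : Matrix m n α) (C : Matrix n m α) :
    (fromBlocks 1 B C (1 + C * B)).det = 1 := by
  rw [det_fromBlocks_one₁₁, add_sub_cancel_right, det_one]

end Matrix

theorem stmt8_general (E₀ E₁ : Type) [Fintype E₀] [Fintype E₁] [DecidableEq E₀] [DecidableEq E₁]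
    (M : Matrix E₀ E₁ ℤ) :
    let M' : Matrix E₀ E₁ (LaurentPolynomial ℤ) := M.map (Int.cast : ℤ → LaurentPolynomial ℤ)
    let G : Matrix (E₀ ⊕ E₁) (E₀ ⊕ E₁) (LaurentPolynomial ℤ) :=
      Matrix.fromBlocks 1 ((T 1 : LaurentPolynomial ℤ) • M')
        ((T 1 : LaurentPolynomial ℤ) • M'.transpose)
        (1 + (T 2 : LaurentPolynomial ℤ) • (M'.transpose * M'))
    let Ginv : Matrix (E₀ ⊕ E₁) (E₀ ⊕ E₁) (LaurentPolynomial ℤ) :=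
      Matrix.fromBlocks (1 + (T 2 : LaurentPolynomial ℤ) • (M' * M'.transpose))
        (-((T 1 : LaurentPolynomial ℤ) • M'))
        (-((T 1 : LaurentPolynomial ℤ) • M'.transpose)) 1
    G * Ginv = 1 ∧ Ginv * G = 1 ∧ G.det = 1 := by
  intro M' G Ginv
  set q : LaurentPolynomial ℤ := T 1
  have hq : (T 2 : LaurentPolynomial ℤ) = q * q := by rw [← T_add]; rfl
  have hG : G = fromBlocks 1 (q • M') (q • M'ᵀ) (1 + (q • M'ᵀ) * (q • M')) := by
    rw [Matrix.smul_mul, Matrix.mul_smul, smul_smul, ← hq]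
  have hGinv : Ginv = fromBlocks (1 + (q • M') * (q • M'ᵀ)) (-(q • M')) (-(q • M'ᵀ)) 1 := by
    rw [Matrix.smul_mul, Matrix.mul_smul, smul_smul, ← hq]
  have hmul : G * Ginv = 1 := by
    rw [hG, hGinv]
    exact fromBlocks_one_add_mul_mul_fromBlocks_neg _ _
  exact ⟨hmul, mul_eq_one_comm.mp hmul, hG ▸ det_fromBlocks_one_add_mul _ _⟩

/-- Let `B` be a signed bipartite graph with parts `E₀, E₁` and signed
adjacency matrix `M` (entries in `{-1,0,1}`).  Over `R = ℤ[q,q⁻¹]`, the q-Gram matrix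
`G = [[I, q·M],[q·Mᵗ, I + q²·Mᵗ·M]]` is invertible over `R`, with inverse the block matrix
`[[I + q²·M·Mᵗ, −q·M],[−q·Mᵗ, I]]`, and `det G = 1`.  In particular the q-lattice obtained
by gluing the q-flow and q-cut lattices of `B` is unimodular. -/
theorem stmt8 (E₀ E₁ : Type) [Fintype E₀] [Fintype E₁] [DecidableEq E₀] [DecidableEq E₁]
    (M : Matrix E₀ E₁ ℤ) (hM : ∀ i j, M i j = -1 ∨ M i j = 0 ∨ M i j = 1) :
    let M' : Matrix E₀ E₁ (LaurentPolynomial ℤ) := M.map (Int.cast : ℤ → LaurentPolynomial ℤ)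
    let G : Matrix (E₀ ⊕ E₁) (E₀ ⊕ E₁) (LaurentPolynomial ℤ) :=
      Matrix.fromBlocks 1 ((T 1 : LaurentPolynomial ℤ) • M')
        ((T 1 : LaurentPolynomial ℤ) • M'.transpose)
        (1 + (T 2 : LaurentPolynomial ℤ) • (M'.transpose * M'))
    let Ginv : Matrix (E₀ ⊕ E₁) (E₀ ⊕ E₁) (LaurentPolynomial ℤ) :=
      Matrix.fromBlocks (1 + (T 2 : LaurentPolynomial ℤ) • (M' * M'.transpose))
        (-((T 1 : LaurentPolynomial ℤ) • M'))
        (-((T 1 : LaurentPolynomial ℤ) • M'.transpose)) 1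
    G * Ginv = 1 ∧ Ginv * G = 1 ∧ G.det = 1 :=
  stmt8_general E₀ E₁ M
end

section
/- Let B be a signed bipartite graph with sets E₀, E₁ and matrix M, and let L = R^{E₀⊔E₁} carry the σ-sesquilinear form ⟨x,y⟩ := ∑_{a,b} σ(x_a)·G(a,b)·y_b, where G is the q-Gram matrix of B. Let F_q(B) ⊆ L be the R-submodule spanned by the standard basis vectors {e_j : j ∈ E₁} (the q-flow lattice), and let C_q(B) ⊆ L be the R-submodule spanned by the vectors {ℓ_i : i ∈ E₀}, where ℓ_i := e_i + q²·∑_{i'∈E₀} (M·Mᵗ)(i',i)·e_{i'} − q·∑_{j∈E₁} M(i,j)·e_j (the q-cut lattice). Then C_q(B) = {y ∈ L : ⟨x,y⟩ = 0 for all x ∈ F_q(B)}, i.e. C_q(B) is the right orthogonal complement of F_q(B) in L, and F_q(B) = {x ∈ L : ⟨x,y⟩ = 0 for all y ∈ C_q(B)}, i.e. F_q(B) is the left orthogonal complement of C_q(B) in L. -/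
/-!
The q-Gram matrix factors as `G = Nᵀ N` with `N = [[1, q M], [0, 1]]` unitriangular, so it is
invertible, and the vectors `ℓᵢ` are exactly the columns `G⁻¹ e_{inl i}`. Hence `⟨x, ℓᵢ⟩ = σ(xᵢ)`,
while `⟨e_j, y⟩ = (G y)_j`; moreover `y` lies in the span of the `ℓᵢ` iff `G y` is supported on
`E₀`. Both orthogonality statements follow by comparing supports, the second one using that
`σ` is injective.
-/

open LaurentPolynomial Matrix

variable {R : Type*} [CommRing R]

lemma mem_span_range_single_iff {ι κ : Type*} [Fintype ι] [DecidableEq ι] (f : κ → ι)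
    (x : ι → R) :
    x ∈ Submodule.span R (Set.range fun k => Pi.single (f k) (1 : R)) ↔
      ∀ a ∉ Set.range f, x a = 0 := by
  constructor
  · intro hx a ha
    induction hx using Submodule.span_induction with
    | mem _ hv =>
      obtain ⟨k, rfl⟩ := hv
      exact Pi.single_eq_of_ne (fun h => ha ⟨k, h.symm⟩) 1
    | zero => rfl
    | add _ _ _ _ hv hw => simp [hv, hw]
    | smul _ _ _ hv => simp [hv]
  · intro hx
    rw [← Finset.univ_sum_single x]
    refine Submodule.sum_mem _ fun a _ => ?_
    by_cases ha : a ∈ Set.range f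
    · obtain ⟨k, rfl⟩ := ha
      rw [← mul_one (x (f k)), ← smul_eq_mul, Pi.single_smul]
      exact Submodule.smul_mem _ _ (Submodule.subset_span ⟨k, rfl⟩)
    · rw [hx a ha, Pi.single_zero]
      exact Submodule.zero_mem _

section SumType

variable {α β : Type*} [DecidableEq α] [DecidableEq β]

lemma mem_span_range_single_inr_iff [Fintype α] [Fintype β] (x : α ⊕ β → R) :
    x ∈ Submodule.span R (Set.range fun j : β => Pi.single (Sum.inr j) (1 : R)) ↔
      ∀ i, x (Sum.inl i) = 0 := by
  simp [mem_span_range_single_iff (R := R) (Sum.inr : β → α ⊕ β) x, Sum.forall]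

lemma mem_span_range_single_inl_iff [Fintype α] [Fintype β] (x : α ⊕ β → R) :
    x ∈ Submodule.span R (Set.range fun i : α => Pi.single (Sum.inl i) (1 : R)) ↔
      ∀ j, x (Sum.inr j) = 0 := by
  simp [mem_span_range_single_iff (R := R) (Sum.inl : α → α ⊕ β) x, Sum.forall]

lemma fromBlocks_qGram_mul_inv [Fintype α] [Fintype β] (q : R) (A : Matrix α β R) :
    fromBlocks 1 (q • A) (q • Aᵀ) (1 + q ^ 2 • (Aᵀ * A)) *
      fromBlocks (1 + q ^ 2 • (A * Aᵀ)) (-q • A) (-q • Aᵀ) 1 = 1 := by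
  simp only [fromBlocks_multiply, Matrix.mul_add, Matrix.add_mul, Matrix.mul_one, Matrix.one_mul,
    Matrix.smul_mul, Matrix.mul_smul, smul_smul, Matrix.mul_assoc]
  rw [← fromBlocks_one]
  congr 1 <;> module

end SumType

def gramForm {ι : Type*} [Fintype ι] (σ : R →+* R) (G : Matrix ι ι R) (x y : ι → R) : R :=
  ∑ a, ∑ b, σ (x a) * G a b * y b

section GramForm

variable {ι : Type*} [Fintype ι] (σ : R →+* R) (G : Matrix ι ι R)

lemma gramForm_eq_sum_mulVec (x y : ι → R) :
    gramForm σ G x y = ∑ a, σ (x a) * (G *ᵥ y) a := by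
  simp only [gramForm, mulVec, dotProduct, Finset.mul_sum, mul_assoc]

lemma gramForm_single_left [DecidableEq ι] (b : ι) (y : ι → R) :
    gramForm σ G (Pi.single b 1) y = (G *ᵥ y) b := by
  rw [gramForm_eq_sum_mulVec, Finset.sum_eq_single b] <;> simp_all

lemma gramForm_mulVec_single_right [DecidableEq ι] {H : Matrix ι ι R} (hGH : G * H = 1)
    (x : ι → R) (a : ι) : gramForm σ G x (H *ᵥ Pi.single a 1) = σ (x a) := by
  rw [gramForm_eq_sum_mulVec, mulVec_mulVec, hGH, one_mulVec, Finset.sum_eq_single a] <;> simp_all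

end GramForm

section Orthogonal

variable {α β : Type*} [Fintype α] [Fintype β] (σ : R →+* R) {G H : Matrix (α ⊕ β) (α ⊕ β) R}

lemma gramForm_eq_zero (x y : α ⊕ β → R) (hx : ∀ i, x (Sum.inl i) = 0)
    (hy : ∀ j, (G *ᵥ y) (Sum.inr j) = 0) : gramForm σ G x y = 0 := by
  simp [gramForm_eq_sum_mulVec, Fintype.sum_sum_type, hx, hy]

variable [DecidableEq α] [DecidableEq β]

lemma mem_span_range_mulVec_single_inl_iff (hGH : G * H = 1) (y : α ⊕ β → R) :
    y ∈ Submodule.span R (Set.range fun i : α => H *ᵥ Pi.single (Sum.inl i) 1) ↔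
      ∀ j, (G *ᵥ y) (Sum.inr j) = 0 := by
  have hHG : H * G = 1 := mul_eq_one_comm.mp hGH
  rw [show (Set.range fun i : α => H *ᵥ Pi.single (Sum.inl i) 1) =
      H.mulVecLin '' Set.range fun i : α => Pi.single (Sum.inl i) 1 by
        rw [← Set.range_comp]; rfl,
    Submodule.span_image, Submodule.mem_map]
  simp_rw [mem_span_range_single_inl_iff]
  constructor
  · rintro ⟨z, hz, rfl⟩
    simpa [mulVec_mulVec, hGH] using hz
  · exact fun hy => ⟨G *ᵥ y, hy, by simp [mulVec_mulVec, hHG]⟩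

theorem span_range_mulVec_single_inl_eq_rightOrthogonal (hGH : G * H = 1) :
    (Submodule.span R (Set.range fun i : α => H *ᵥ Pi.single (Sum.inl i) 1) : Set (α ⊕ β → R)) =
      {y | ∀ x ∈ Submodule.span R (Set.range fun j : β => Pi.single (Sum.inr j) (1 : R)),
        gramForm σ G x y = 0} := by
  ext y
  simp only [SetLike.mem_coe, mem_span_range_mulVec_single_inl_iff hGH,
    mem_span_range_single_inr_iff]
  refine ⟨fun hy x hx => gramForm_eq_zero σ x y hx hy, fun hy j => ?_⟩
  rw [← gramForm_single_left σ]
  exact hy _ fun i => Pi.single_eq_of_ne (by simp) 1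

theorem span_range_single_inr_eq_leftOrthogonal (hσ : Function.Injective σ) (hGH : G * H = 1) :
    (Submodule.span R (Set.range fun j : β => (Pi.single (Sum.inr j) 1 : α ⊕ β → R)) :
      Set (α ⊕ β → R)) = {x | ∀ y ∈ Submodule.span R (Set.range fun i : α =>
        H *ᵥ Pi.single (Sum.inl i) 1), gramForm σ G x y = 0} := by
  ext x
  simp only [SetLike.mem_coe, mem_span_range_mulVec_single_inl_iff hGH,
    mem_span_range_single_inr_iff]
  refine ⟨fun hx y hy => gramForm_eq_zero σ x y hx hy, fun hx i => hσ ?_⟩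
  rw [map_zero, ← gramForm_mulVec_single_right σ G hGH]
  exact hx _ fun j => by
    rw [mulVec_mulVec, hGH, one_mulVec]
    exact Pi.single_eq_of_ne (by simp) 1

end Orthogonal

lemma LaurentPolynomial.injective_of_map_T_one (σ : ℤ[T;T⁻¹] →+* ℤ[T;T⁻¹])
    (hσ : σ (T 1) = T (-1)) : Function.Injective σ := by
  have hσ_eq : σ.toIntAlgHom = (invert : ℤ[T;T⁻¹] ≃ₐ[ℤ] _).toAlgHom := by
    refine AddMonoidAlgebra.algHom_ext' (MonoidHom.ext_mint ?_) (Subsingleton.elim _ _)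
    change σ (T 1) = invert (T 1)
    rw [invert_T, hσ]
  have h (p : ℤ[T;T⁻¹]) : σ p = invert p := DFunLike.congr_fun hσ_eq p
  exact fun a b hab => invert.injective (by rwa [← h a, ← h b])

theorem stmt9_general (E₀ E₁ : Type) [Fintype E₀] [Fintype E₁] [DecidableEq E₀] [DecidableEq E₁]
    (σ : LaurentPolynomial ℤ →+* LaurentPolynomial ℤ)
    (hσ : σ (T 1) = T (-1))
    (M : Matrix E₀ E₁ ℤ) :
    let G : Matrix (E₀ ⊕ E₁) (E₀ ⊕ E₁) (LaurentPolynomial ℤ) :=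
      Matrix.fromBlocks 1 ((T 1 : LaurentPolynomial ℤ) • M.map (Int.cast : ℤ → LaurentPolynomial ℤ))
        ((T 1 : LaurentPolynomial ℤ) • (M.map (Int.cast : ℤ → LaurentPolynomial ℤ)).transpose)
        (1 + (T 2 : LaurentPolynomial ℤ) •
          ((M.map (Int.cast : ℤ → LaurentPolynomial ℤ)).transpose *
            M.map (Int.cast : ℤ → LaurentPolynomial ℤ)))
    let form : ((E₀ ⊕ E₁) → LaurentPolynomial ℤ) → ((E₀ ⊕ E₁) → LaurentPolynomial ℤ) →
        LaurentPolynomial ℤ := fun x y => ∑ a, ∑ b, σ (x a) * G a b * y b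
    let Fq : Submodule (LaurentPolynomial ℤ) ((E₀ ⊕ E₁) → LaurentPolynomial ℤ) :=
      Submodule.span (LaurentPolynomial ℤ)
        (Set.range fun j : E₁ => Pi.single (Sum.inr j) (1 : LaurentPolynomial ℤ))
    let ℓ : E₀ → ((E₀ ⊕ E₁) → LaurentPolynomial ℤ) := fun i =>
      Sum.elim
        (fun i' : E₀ => (if i' = i then 1 else 0) +
          T 2 * (((M * M.transpose) i' i : ℤ) : LaurentPolynomial ℤ))
        (fun j : E₁ => -(T 1 * ((M i j : ℤ) : LaurentPolynomial ℤ)))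
    let Cq : Submodule (LaurentPolynomial ℤ) ((E₀ ⊕ E₁) → LaurentPolynomial ℤ) :=
      Submodule.span (LaurentPolynomial ℤ) (Set.range ℓ)
    (Cq : Set ((E₀ ⊕ E₁) → LaurentPolynomial ℤ)) = {y | ∀ x ∈ Fq, form x y = 0} ∧
    (Fq : Set ((E₀ ⊕ E₁) → LaurentPolynomial ℤ)) = {x | ∀ y ∈ Cq, form x y = 0} := by
  intro G form Fq ℓ Cq
  set A := M.map (Int.cast : ℤ → ℤ[T;T⁻¹])
  let H : Matrix (E₀ ⊕ E₁) (E₀ ⊕ E₁) ℤ[T;T⁻¹] :=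
    fromBlocks (1 + (T 1 : ℤ[T;T⁻¹]) ^ 2 • (A * Aᵀ)) (-(T 1 : ℤ[T;T⁻¹]) • A)
      (-(T 1 : ℤ[T;T⁻¹]) • Aᵀ) 1
  have hGH : G * H = 1 := by
    have hT : (T 2 : ℤ[T;T⁻¹]) = T 1 ^ 2 := by rw [T_pow, mul_one]; rfl
    simp only [G, hT]
    exact fromBlocks_qGram_mul_inv (T 1) A
  have hℓ : ℓ = fun i => H *ᵥ Pi.single (Sum.inl i) 1 := by
    funext i a
    cases a <;> simp [ℓ, H, A, one_apply, T_pow, Matrix.mul_apply]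
  have hCq : Cq = Submodule.span ℤ[T;T⁻¹] (Set.range fun i => H *ᵥ Pi.single (Sum.inl i) 1) := by
    rw [← hℓ]
  rw [hCq]
  exact ⟨span_range_mulVec_single_inl_eq_rightOrthogonal σ hGH,
    span_range_single_inr_eq_leftOrthogonal σ (LaurentPolynomial.injective_of_map_T_one σ hσ) hGH⟩

/-- Let `B` be a signed bipartite graph with parts `E₀, E₁` and signed
adjacency matrix `M`, and let `L = R^{E₀⊔E₁}` carry the σ-sesquilinear form given by the
q-Gram matrix `G = [[I, q·M],[q·Mᵗ, I + q²·Mᵗ·M]]`.  Let `F_q(B)` be the `R`-span of the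
standard basis vectors indexed by `E₁` and `C_q(B)` the `R`-span of the vectors
`ℓᵢ = eᵢ + q²·∑_{i'} (M·Mᵗ)(i',i)·e_{i'} − q·∑_j M(i,j)·e_j` for `i ∈ E₀`.  Then `C_q(B)`
is the right orthogonal complement of `F_q(B)` in `L`, and `F_q(B)` is the left orthogonal
complement of `C_q(B)` in `L`. -/
theorem stmt9 (E₀ E₁ : Type) [Fintype E₀] [Fintype E₁] [DecidableEq E₀] [DecidableEq E₁]
    (σ : LaurentPolynomial ℤ →+* LaurentPolynomial ℤ)
    (hσ : σ (T 1) = T (-1))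
    (M : Matrix E₀ E₁ ℤ) (hM : ∀ i j, M i j = -1 ∨ M i j = 0 ∨ M i j = 1) :
    let G : Matrix (E₀ ⊕ E₁) (E₀ ⊕ E₁) (LaurentPolynomial ℤ) :=
      Matrix.fromBlocks 1 ((T 1 : LaurentPolynomial ℤ) • M.map (Int.cast : ℤ → LaurentPolynomial ℤ))
        ((T 1 : LaurentPolynomial ℤ) • (M.map (Int.cast : ℤ → LaurentPolynomial ℤ)).transpose)
        (1 + (T 2 : LaurentPolynomial ℤ) •
          ((M.map (Int.cast : ℤ → LaurentPolynomial ℤ)).transpose *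
            M.map (Int.cast : ℤ → LaurentPolynomial ℤ)))
    let form : ((E₀ ⊕ E₁) → LaurentPolynomial ℤ) → ((E₀ ⊕ E₁) → LaurentPolynomial ℤ) →
        LaurentPolynomial ℤ := fun x y => ∑ a, ∑ b, σ (x a) * G a b * y b
    let Fq : Submodule (LaurentPolynomial ℤ) ((E₀ ⊕ E₁) → LaurentPolynomial ℤ) :=
      Submodule.span (LaurentPolynomial ℤ)
        (Set.range fun j : E₁ => Pi.single (Sum.inr j) (1 : LaurentPolynomial ℤ))
    let ℓ : E₀ → ((E₀ ⊕ E₁) → LaurentPolynomial ℤ) := fun i =>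
      Sum.elim
        (fun i' : E₀ => (if i' = i then 1 else 0) +
          T 2 * (((M * M.transpose) i' i : ℤ) : LaurentPolynomial ℤ))
        (fun j : E₁ => -(T 1 * ((M i j : ℤ) : LaurentPolynomial ℤ)))
    let Cq : Submodule (LaurentPolynomial ℤ) ((E₀ ⊕ E₁) → LaurentPolynomial ℤ) :=
      Submodule.span (LaurentPolynomial ℤ) (Set.range ℓ)
    (Cq : Set ((E₀ ⊕ E₁) → LaurentPolynomial ℤ)) = {y | ∀ x ∈ Fq, form x y = 0} ∧
    (Fq : Set ((E₀ ⊕ E₁) → LaurentPolynomial ℤ)) = {x | ∀ y ∈ Cq, form x y = 0} :=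
  stmt9_general E₀ E₁ σ hσ M
end

section
/- Let Γ be a finite connected oriented simple graph with spanning tree T, and fix a vertex v₀ ∈ V. Define the q-incidence matrix D_q ∈ Mat_{V×E}(ℤ[q]) by D_q(v,e) = D(v,e) for e ∈ T and D_q(v,e) = q·D(v,e) for e ∉ T, and let D₀ be the submatrix of D_q obtained by deleting the row indexed by v₀. Then det(D₀·D₀ᵗ) = ∑_{T'} q^{2·|T'∖T|}, where the sum ranges over all spanning trees T' of Γ. -/
/-- The incidence matrix of an oriented simple graph. -/
def incMat {V : Type} [DecidableEq V] (G : SimpleGraph V)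
    (head tail : G.edgeSet → V) : Matrix V G.edgeSet ℤ :=
  fun v e => if v = head e then 1 else if v = tail e then -1 else 0

/-- `head` and `tail` form an orientation of `G`. -/
def IsOrientation {V : Type} (G : SimpleGraph V) (head tail : G.edgeSet → V) : Prop :=
  ∀ e : G.edgeSet, (e : Sym2 V) = s(head e, tail e)

/-- `T` is a spanning tree of `G`. -/
def IsSpanningTree {V : Type} [Fintype V] (G : SimpleGraph V) (T : Set G.edgeSet) : Prop :=
  (SimpleGraph.fromEdgeSet (Subtype.val '' T)).Connected ∧ T.ncard + 1 = Fintype.card V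

/-!
By Cauchy–Binet, `det (D₀ D₀ᵀ)` is the sum, over edge sets `S` with `|S| = |V| - 1`, of
`det (D₀|_S)²`. Pulling the factors `q` out of the columns gives
`det (D₀|_S) = q ^ |S \ T| · det N_S`, where `N_S` is the reduced integer incidence matrix.
If `S` is disconnected, the indicator of the vertices not reachable from `v₀` lies in the left
kernel of `N_S`. If `S` is connected, i.e. a spanning tree, the signed edge counts of paths
to `v₀` form an integer inverse of `N_S`, so `det N_S = ±1`.
-/

open Finset Function Equiv

theorem Finset.range_coe_equiv {m n : Type*} {S : Finset n} (e : m ≃ S) :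
    Set.range (fun i => (e i : n)) = S :=
  (EquivLike.range_comp Subtype.val e).trans Subtype.range_coe

open scoped Classical in
theorem Finset.sum_injective_eq_sum_sum_perm {m n M : Type*} [Fintype m] [DecidableEq m]
    [Fintype n] [AddCommMonoid M]
    (e : ∀ S : {S : Finset n // S.card = Fintype.card m}, m ≃ S.1) (F : (m → n) → M) :
    ∑ f : m → n with Injective f, F f = ∑ S, ∑ σ : Perm m, F (fun i => e S (σ i)) := by
  rw [← Fintype.sum_sigma (fun x : Σ _, Perm m => F fun i => e x.1 (x.2 i))]
  symm
  refine sum_bij (fun x _ i => e x.1 (x.2 i)) (fun x _ => ?_) (fun x _ y _ hxy => ?_)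
    (fun f hf => ?_) (fun _ _ => rfl)
  · exact (mem_filter_univ _).mpr <|
      (Subtype.val_injective.comp (e x.1).injective).comp x.2.injective
  · obtain ⟨S, σ⟩ := x
    obtain ⟨S', σ'⟩ := y
    have hS : S = S' := by
      apply Subtype.ext
      apply Finset.coe_injective
      rw [← Finset.range_coe_equiv (e S), ← Finset.range_coe_equiv (e S'),
        ← EquivLike.range_comp (fun i => (e S i : n)) σ,
        ← EquivLike.range_comp (fun i => (e S' i : n)) σ']
      exact congrArg Set.range hxy
    subst hS
    have : σ = σ' := Equiv.ext fun i =>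
      (e S).injective (Subtype.val_injective (congrFun hxy i))
    rw [this]
  · have hinj : Injective f := (mem_filter_univ _).mp hf
    let S : {S : Finset n // S.card = Fintype.card m} :=
      ⟨univ.image f, by rw [card_image_of_injective _ hinj, card_univ]⟩
    let τ : m → m := fun i => (e S).symm ⟨f i, mem_image_of_mem f (mem_univ i)⟩
    have hτ : Injective τ := fun i j h => hinj (by simpa [τ] using h)
    refine ⟨⟨S, Equiv.ofBijective τ (Finite.injective_iff_bijective.mp hτ)⟩, mem_univ _, ?_⟩
    funext i
    simp [τ]

namespace Matrix

variable {R : Type*} [CommRing R] {m n : Type*} [Fintype m] [Fintype n] [DecidableEq m]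

theorem det_mul_eq_sum_det_submatrix_mul_prod (A : Matrix m n R) (B : Matrix n m R) :
    (A * B).det = ∑ f : m → n, (A.submatrix id f).det * ∏ i, B (f i) i := by
  simp only [det_apply', mul_apply, prod_univ_sum, sum_mul, Fintype.piFinset_univ, mul_sum,
    submatrix_apply, id_eq]
  rw [sum_comm]
  refine sum_congr rfl fun f _ => sum_congr rfl fun σ _ => ?_
  rw [prod_mul_distrib, mul_assoc]

omit [Fintype n] in
theorem det_submatrix_eq_zero_of_not_injective (A : Matrix m n R) {f : m → n}
    (hf : ¬ Injective f) : (A.submatrix id f).det = 0 := by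
  obtain ⟨i, j, hij, hne⟩ := Function.not_injective_iff.mp hf
  exact det_zero_of_column_eq hne fun k => by simp [hij]

theorem det_mul_eq_sum_det_submatrix_mul_det_submatrix (A : Matrix m n R) (B : Matrix n m R)
    (e : ∀ S : {S : Finset n // S.card = Fintype.card m}, m ≃ S.1) :
    (A * B).det = ∑ S, (A.submatrix id (fun i => (e S i : n))).det *
      (B.submatrix (fun i => (e S i : n)) id).det := by
  classical
  rw [det_mul_eq_sum_det_submatrix_mul_prod, ← sum_filter_of_ne fun f _ hf =>
    by_contra fun hinj => hf (by rw [det_submatrix_eq_zero_of_not_injective A hinj, zero_mul]),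
    sum_injective_eq_sum_sum_perm e]
  refine sum_congr rfl fun S _ => ?_
  rw [det_apply' (B.submatrix _ id), mul_sum]
  refine sum_congr rfl fun σ _ => ?_
  rw [show A.submatrix id (fun i => (e S (σ i) : n)) =
    (A.submatrix id (fun i => (e S i : n))).submatrix id σ from rfl, det_permute']
  simp only [submatrix_apply, id_eq]
  ring

end Matrix

section Incidence

variable {V : Type} {G : SimpleGraph V} {head tail : G.edgeSet → V}

theorem IsOrientation.head_ne_tail (hor : IsOrientation G head tail) (e : G.edgeSet) :
    head e ≠ tail e := fun h =>
  G.not_isDiag_of_mem_edgeSet e.2 (by rw [hor e, h]; exact Sym2.mk_isDiag_iff.mpr rfl)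

variable [DecidableEq V]

theorem IsOrientation.incMat_eq (hor : IsOrientation G head tail) (v : V) (e : G.edgeSet) :
    incMat G head tail v e = (if v = head e then 1 else 0) - (if v = tail e then 1 else 0) := by
  unfold incMat
  split_ifs with h₁ h₂ <;> first | exact absurd (h₁.symm.trans h₂) (hor.head_ne_tail e) | rfl

theorem IsOrientation.sum_mul_incMat [Fintype V] (hor : IsOrientation G head tail)
    (x : V → ℤ) (e : G.edgeSet) :
    ∑ v, x v * incMat G head tail v e = x (head e) - x (tail e) := by
  simp only [hor.incMat_eq, mul_sub, mul_ite, mul_one, mul_zero, sum_sub_distrib,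
    sum_ite_eq', mem_univ, if_true]

variable (head) in
/-- The net number of traversals of each edge in the direction `head → tail`. -/
def SimpleGraph.Walk.flow {H : SimpleGraph V} : ∀ {a b : V}, H.Walk a b → G.edgeSet → ℤ
  | _, _, .nil, _ => 0
  | a, _, .cons (v := c) _ p, e =>
      (if (e : Sym2 V) = s(a, c) then (if a = head e then 1 else -1) else 0) + p.flow e

theorem SimpleGraph.Walk.flow_eq_zero {H : SimpleGraph V} {a b : V} (p : H.Walk a b)
    {e : G.edgeSet} (he : (e : Sym2 V) ∉ p.edges) : p.flow head e = 0 := by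
  induction p with
  | nil => rfl
  | cons h p ih =>
    rw [edges_cons, List.mem_cons, not_or] at he
    rw [flow, if_neg he.1, ih he.2, add_zero]

theorem IsOrientation.sum_incMat_mul_flow [Fintype V] [Fintype G.edgeSet]
    (hor : IsOrientation G head tail) {H : SimpleGraph V} (hH : H ≤ G) {a b : V}
    (p : H.Walk a b) (v : V) :
    ∑ e, incMat G head tail v e * p.flow head e =
      (if v = a then 1 else 0) - (if v = b then 1 else 0) := by
  induction p with
  | nil => simp [SimpleGraph.Walk.flow]
  | @cons a c b h p ih =>
    let ε : G.edgeSet := ⟨s(a, c), hH h⟩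
    have hstep : ∑ e, incMat G head tail v e *
        (if (e : Sym2 V) = s(a, c) then (if a = head e then 1 else -1) else 0) =
        (if v = a then 1 else 0) - (if v = c then 1 else 0) := by
      rw [sum_eq_single ε (fun e _ he => by rw [if_neg (fun h => he (Subtype.ext h)), mul_zero])
        (by simp), if_pos rfl, hor.incMat_eq]
      rcases Sym2.eq_iff.mp ((hor ε).symm : s(head ε, tail ε) = s(a, c)) with
        ⟨h₁, h₂⟩ | ⟨h₁, h₂⟩
      · rw [h₁, h₂, if_pos rfl]; ring
      · rw [h₁, h₂, if_neg h.ne]; ring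
    simp only [SimpleGraph.Walk.flow, mul_add, sum_add_distrib, ih, hstep]
    ring

variable (G head tail) in
def reducedIncMat (v₀ : V) {ι : Type*} (g : ι → G.edgeSet) : Matrix {v // v ≠ v₀} ι ℤ :=
  Matrix.of fun u j => incMat G head tail u (g j)

variable [Fintype V] {v₀ : V} {g : {v // v ≠ v₀} → G.edgeSet}

open SimpleGraph in
theorem IsOrientation.isUnit_det_reducedIncMat [Fintype G.edgeSet]
    (hor : IsOrientation G head tail) (hg : Injective g)
    (hc : (fromEdgeSet (Set.range fun j => (g j : Sym2 V))).Connected) :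
    IsUnit (reducedIncMat G head tail v₀ g).det := by
  set H := fromEdgeSet (Set.range fun j => (g j : Sym2 V))
  have hHG : H ≤ G := (fromEdgeSet_le G).mpr fun _ ⟨⟨j, hj⟩, _⟩ => hj ▸ (g j).2
  let p : ∀ v, H.Walk v v₀ := fun v => (hc.preconnected v v₀).some
  have hflow (w : V) (e : G.edgeSet) (he : e ∉ Set.range g) : (p w).flow head e = 0 :=
    (p w).flow_eq_zero fun hmem => by
      have hH := (p w).edges_subset_edgeSet hmem
      rw [edgeSet_fromEdgeSet] at hH
      obtain ⟨⟨j, hj⟩, _⟩ := hH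
      exact he ⟨j, Subtype.ext hj⟩
  let P : Matrix {v // v ≠ v₀} {v // v ≠ v₀} ℤ := Matrix.of fun j w => (p w).flow head (g j)
  have hNP : reducedIncMat G head tail v₀ g * P = 1 := by
    ext u w
    have hsum : ∑ j, reducedIncMat G head tail v₀ g u j * P j w =
        ∑ e, incMat G head tail u e * (p w).flow head e :=
      Fintype.sum_of_injective g hg _ _ (fun e he => by rw [hflow w e he, mul_zero]) fun _ => rfl
    rw [Matrix.mul_apply, hsum, hor.sum_incMat_mul_flow hHG, if_neg u.2, sub_zero,
      Matrix.one_apply]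
    simp only [Subtype.ext_iff]
  exact IsUnit.of_mul_eq_one P.det (by rw [← Matrix.det_mul, hNP, Matrix.det_one])

open SimpleGraph in
theorem IsOrientation.det_reducedIncMat_eq_zero (hor : IsOrientation G head tail)
    (hc : ¬ (fromEdgeSet (Set.range fun j => (g j : Sym2 V))).Connected) :
    (reducedIncMat G head tail v₀ g).det = 0 := by
  set H := fromEdgeSet (Set.range fun j => (g j : Sym2 V))
  let x : V → ℤ := fun v => if H.Reachable v v₀ then 0 else 1
  obtain ⟨a, ha⟩ : ∃ a, ¬ H.Reachable a v₀ := by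
    by_contra! h
    exact hc (connected_iff_exists_forall_reachable H |>.mpr ⟨v₀, fun w => (h w).symm⟩)
  rw [← Matrix.exists_vecMul_eq_zero_iff]
  refine ⟨fun u => x u, fun h0 => ?_, funext fun j => ?_⟩
  · have hxa := congrFun h0 ⟨a, fun h => ha (h ▸ Reachable.refl _)⟩
    simp [x, ha] at hxa
  · have hadj : H.Adj (head (g j)) (tail (g j)) :=
      (fromEdgeSet_adj _).mpr ⟨⟨j, hor _⟩, hor.head_ne_tail _⟩
    have hx : x (head (g j)) = x (tail (g j)) := by
      simp only [x, show H.Reachable (head (g j)) v₀ ↔ H.Reachable (tail (g j)) v₀ from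
        ⟨hadj.symm.reachable.trans, hadj.reachable.trans⟩]
    calc ∑ u : {v // v ≠ v₀}, x u * incMat G head tail u (g j)
        = ∑ v, x v * incMat G head tail v (g j) := by
          rw [Fintype.sum_eq_add_sum_subtype_ne _ v₀]
          simp [x]
      _ = 0 := by rw [hor.sum_mul_incMat, hx, sub_self]

theorem IsOrientation.det_reducedIncMat_sq [Fintype G.edgeSet]
    (hor : IsOrientation G head tail) (hg : Injective g) :
    (reducedIncMat G head tail v₀ g).det ^ 2 =
      if (SimpleGraph.fromEdgeSet (Set.range fun j => (g j : Sym2 V))).Connected then 1 else 0 := by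
  split_ifs with hc
  · exact Int.isUnit_sq (hor.isUnit_det_reducedIncMat hg hc)
  · rw [hor.det_reducedIncMat_eq_zero hc, zero_pow two_ne_zero]

end Incidence

section QIncidence

open Polynomial

variable {V : Type} [DecidableEq V] [Fintype V] {G : SimpleGraph V} {head tail : G.edgeSet → V}

variable (G head tail) in
noncomputable def qIncMat (T : Set G.edgeSet) [DecidablePred (· ∈ T)] : Matrix V G.edgeSet ℤ[X] :=
  fun v e => if e ∈ T then (incMat G head tail v e : ℤ[X]) else X * (incMat G head tail v e : ℤ[X])

variable {v₀ : V} (T : Set G.edgeSet) [DecidablePred (· ∈ T)]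

theorem det_submatrix_qIncMat (g : {v // v ≠ v₀} → G.edgeSet) :
    ((qIncMat G head tail T).submatrix (↑) g).det =
      X ^ #{j | g j ∉ T} * ((reducedIncMat G head tail v₀ g).det : ℤ[X]) := by
  have hscale : (qIncMat G head tail T).submatrix (↑) g = Matrix.of fun u j =>
      (if g j ∈ T then 1 else X) * (reducedIncMat G head tail v₀ g).map (Int.cast) u j := by
    ext u j
    simp only [qIncMat, reducedIncMat, Matrix.submatrix_apply, Matrix.of_apply, Matrix.map_apply]
    split_ifs <;> simp
  rw [hscale, Matrix.det_mul_row, Int.cast_det, prod_ite, prod_const_one, one_mul, prod_const]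

open scoped Classical in
theorem IsOrientation.det_submatrix_qIncMat_sq [Fintype G.edgeSet]
    (hor : IsOrientation G head tail) {S : Finset G.edgeSet} (e : {v // v ≠ v₀} ≃ S) :
    ((qIncMat G head tail T).submatrix (↑) (fun j => (e j : G.edgeSet))).det ^ 2 =
      if (SimpleGraph.fromEdgeSet (Subtype.val '' (S : Set G.edgeSet))).Connected
      then X ^ (2 * ((S : Set G.edgeSet) \ T).ncard) else 0 := by
  have hinj : Injective fun j => (e j : G.edgeSet) := Subtype.val_injective.comp e.injective
  have hrange : (Set.range fun j => ((e j : G.edgeSet) : Sym2 V)) =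
      Subtype.val '' (S : Set G.edgeSet) := by
    rw [← Finset.range_coe_equiv e, ← Set.range_comp]
    rfl
  have hcard : #{j | (e j : G.edgeSet) ∉ T} = ((S : Set G.edgeSet) \ T).ncard := by
    rw [show (S : Set G.edgeSet) \ T = ↑{x ∈ S | x ∉ T} by ext; simp, Set.ncard_coe_finset]
    refine card_bij (fun j _ => e j) (fun j hj => mem_filter.mpr ⟨(e j).2, (mem_filter.mp hj).2⟩)
      (fun _ _ _ _ h => e.injective (Subtype.ext h)) fun x hx => ?_
    obtain ⟨hxS, hxT⟩ := mem_filter.mp hx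
    exact ⟨e.symm ⟨x, hxS⟩, mem_filter.mpr ⟨mem_univ _, by simpa using hxT⟩, by simp⟩
  rw [det_submatrix_qIncMat, mul_pow, ← Int.cast_pow, hor.det_reducedIncMat_sq hinj, hcard,
    ← pow_mul, mul_comm 2]
  simp only [hrange]
  split_ifs <;> simp

end QIncidence

open scoped Classical in
theorem sum_isSpanningTree_eq_sum_finset {V M : Type} [Fintype V] [DecidableEq V] [AddCommMonoid M]
    {G : SimpleGraph V} [Fintype G.edgeSet] {k : ℕ} (hk : k + 1 = Fintype.card V)
    (f : Set G.edgeSet → M) :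
    ∑ T : {S // IsSpanningTree G S}, f T = ∑ S : {S : Finset G.edgeSet // S.card = k},
      if (SimpleGraph.fromEdgeSet (Subtype.val '' (S.1 : Set G.edgeSet))).Connected
      then f S.1 else 0 := by
  rw [← sum_filter]
  refine sum_bij' (fun T _ => ⟨T.1.toFinset, ?_⟩) (fun S hS => ⟨S.1, ?_⟩) (fun T _ => ?_)
    (fun S hS => ?_) (fun T _ => ?_) (fun S _ => ?_) (fun T _ => ?_)
  · rw [← Set.ncard_eq_toFinset_card']
    have := T.2.2
    omega
  · refine ⟨(mem_filter.mp hS).2, ?_⟩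
    rw [Set.ncard_coe_finset, S.2, hk]
  · simpa using T.2.1
  · exact mem_univ _
  · simp
  · simp
  · simp

open scoped Classical in
theorem stmt15_general (V : Type) [Fintype V] [DecidableEq V] (G : SimpleGraph V)
    [Fintype G.edgeSet]
    (head tail : G.edgeSet → V) (hor : IsOrientation G head tail)
    (T : Set G.edgeSet)
    (v₀ : V) :
    let Dq : Matrix V G.edgeSet (Polynomial ℤ) := fun v e =>
      if e ∈ T then ((incMat G head tail v e : ℤ) : Polynomial ℤ)
      else Polynomial.X * ((incMat G head tail v e : ℤ) : Polynomial ℤ)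
    let D₀ : Matrix {v : V // v ≠ v₀} G.edgeSet (Polynomial ℤ) := fun v e => Dq v.val e
    (D₀ * D₀.transpose).det =
      ∑ T' : {S : Set G.edgeSet // IsSpanningTree G S},
        Polynomial.X ^ (2 * (T'.val \ T).ncard) := by
  intro Dq D₀
  have hD₀ (f : {v // v ≠ v₀} → G.edgeSet) :
      D₀.submatrix id f = (qIncMat G head tail T).submatrix (↑) f := by
    rfl
  have hk : Fintype.card {v // v ≠ v₀} + 1 = Fintype.card V := by
    rw [Fintype.card_subtype_compl, Fintype.card_subtype_eq]
    exact Nat.sub_add_cancel (Fintype.card_pos_iff.mpr ⟨v₀⟩)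
  let e (S : {S : Finset G.edgeSet // S.card = Fintype.card {v // v ≠ v₀}}) :
      {v // v ≠ v₀} ≃ S.1 :=
    Fintype.equivOfCardEq (by rw [Fintype.card_coe, S.2])
  rw [Matrix.det_mul_eq_sum_det_submatrix_mul_det_submatrix D₀ D₀.transpose e,
    sum_isSpanningTree_eq_sum_finset hk fun S => Polynomial.X ^ (2 * (S \ T).ncard)]
  refine sum_congr rfl fun S _ => ?_
  rw [← Matrix.transpose_submatrix, Matrix.det_transpose, ← sq, hD₀]
  exact hor.det_submatrix_qIncMat_sq T (e S)

open scoped Classical in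
/-- Let `Γ` be a finite connected oriented simple graph with spanning
tree `T`, and fix a vertex `v₀`.  Let `D_q` be the q-incidence matrix over `ℤ[q]`
(columns ofedges outside `T` scaled by `q`), and `D₀` the submatrix obtained by deleting
the row of `v₀`.  Then `det (D₀·D₀ᵗ) = ∑_{T'} q^{2·|T'∖T|}`, summed over all spanning
trees `T'` of `Γ`. -/
theorem stmt15 (V : Type) [Fintype V] [DecidableEq V] (G : SimpleGraph V)
    [Fintype G.edgeSet]
    (head tail : G.edgeSet → V) (hor : IsOrientation G head tail)
    (hconn : G.Connected)
    (T : Set G.edgeSet) (hT : IsSpanningTree G T)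
    (v₀ : V) :
    let Dq : Matrix V G.edgeSet (Polynomial ℤ) := fun v e =>
      if e ∈ T then ((incMat G head tail v e : ℤ) : Polynomial ℤ)
      else Polynomial.X * ((incMat G head tail v e : ℤ) : Polynomial ℤ)
    let D₀ : Matrix {v : V // v ≠ v₀} G.edgeSet (Polynomial ℤ) := fun v e => Dq v.val e
    (D₀ * D₀.transpose).det =
      ∑ T' : {S : Set G.edgeSet // IsSpanningTree G S},
        Polynomial.X ^ (2 * (T'.val \ T).ncard) :=
  stmt15_general V G head tail hor T v₀
end
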